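/- arXiv:2507.19384 — 6 statements merged into one kernel-verified Lean document; each statement's English description precedes it below -/
import Mathlib

section
/- Every strongly t̄-separable code has t-uniqueness descendant code: if C is an (n,M,q) code such that for every nonempty C0 ⊆ C with |C0| ≤ t we have ∩_{S ∈ P(C0)} S = C0, then for every such C0 there exist a codeword c ∈ C0 and a coordinate i ∈ {1,...,n} such that c(i) ≠ c'(i) for all c' ∈ (desc(C0) ∩ C) \ {c}. -/
def desc {n q : ℕ} (C' : Finset (Fin n → Fin q)) : Set (Fin n → Fin q) :=
  {x | ∀ i, ∃ c ∈ C', c i = x i}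

/-- every strongly `t̄`-separable code has `t`-uniqueness descendant code. -/
theorem ssc_has_uniqueness {n M q t : ℕ} (C : Finset (Fin n → Fin q)) (hM : C.card = M)
    (hSSC : ∀ C0 ⊆ C, C0.Nonempty → C0.card ≤ t →
      (⋂ S ∈ {S : Finset (Fin n → Fin q) | S ⊆ C ∧ desc S = desc C0},
        (S : Set (Fin n → Fin q))) = (C0 : Set (Fin n → Fin q))) :
    ∀ C0 ⊆ C, C0.Nonempty → C0.card ≤ t →
      ∃ c ∈ C0, ∃ i : Fin n,
        ∀ c' ∈ (desc C0 ∩ (C : Set (Fin n → Fin q))) \ {c}, c' i ≠ c i := by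
  intro C0 hC0 hne hcard
  by_contra h
  push_neg at h
  classical
  obtain ⟨c0, hc0⟩ := hne
  -- for every i there is c' in (desc C0 ∩ C) \ {c0} with c' i = c0 i
  have hcov : ∀ i : Fin n, ∃ c', (c' ∈ desc C0 ∧ c' ∈ C) ∧ c' ≠ c0 ∧ c' i = c0 i := by
    intro i
    obtain ⟨c', hc', he⟩ := h c0 hc0 i
    rcases hc' with ⟨⟨hd, hC⟩, hne'⟩
    simp only [Set.mem_singleton_iff] at hne'
    exact ⟨c', ⟨hd, hC⟩, hne', he⟩
  set S : Finset (Fin n → Fin q) :=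
    (C.filter (fun x => x ∈ desc C0)).erase c0 with hS
  have hmemS : ∀ x, x ∈ S ↔ x ≠ c0 ∧ x ∈ C ∧ x ∈ desc C0 := by
    intro x; simp [hS, Finset.mem_erase, Finset.mem_filter, and_assoc]
  have hSsubC : S ⊆ C := fun x hx => ((hmemS x).1 hx).2.1
  -- C0 ⊆ desc C0
  have hC0desc : ∀ x ∈ C0, x ∈ desc C0 := by
    intro x hx i; exact ⟨x, hx, rfl⟩
  have hdesc : desc S = desc C0 := by
    apply Set.eq_of_subset_of_subset
    · intro x hx i
      obtain ⟨c', hc'S, hc'i⟩ := hx i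
      obtain ⟨_, _, hc'd⟩ := (hmemS c').1 hc'S
      obtain ⟨d, hd, hdi⟩ := hc'd i
      exact ⟨d, hd, by rw [hdi, hc'i]⟩
    · intro x hx i
      obtain ⟨c', hc', hc'i⟩ := hx i
      by_cases hc'c0 : c' = c0
      · obtain ⟨c'', ⟨hd, hC⟩, hne', he⟩ := hcov i
        exact ⟨c'', (hmemS c'').2 ⟨hne', hC, hd⟩, by rw [he, ← hc'c0, hc'i]⟩
      · exact ⟨c', (hmemS c').2 ⟨hc'c0, hC0 hc', hC0desc c' hc'⟩, hc'i⟩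
  have hI := hSSC C0 hC0 ⟨c0, hc0⟩ hcard
  have hc0I : c0 ∈ ⋂ S' ∈ {S' : Finset (Fin n → Fin q) | S' ⊆ C ∧ desc S' = desc C0},
      (S' : Set (Fin n → Fin q)) := by
    rw [hI]; exact_mod_cast hc0
  have hc0S : c0 ∈ (S : Set (Fin n → Fin q)) := by
    exact Set.mem_iInter₂.1 hc0I S ⟨hSsubC, hdesc⟩
  exact ((hmemS c0).1 (by exact_mod_cast hc0S)).1 rfl
end

section
/- Every t-SMIPPC has t-uniqueness descendant code: if C is an (n,M,q) code such that for every nonempty C0 ⊆ C with |C0| ≤ t, ∩_{S ∈ P(C0)} S ≠ ∅, then for every such C0 there exist c ∈ C0 and a coordinate i such that c(i) ≠ c'(i) for all c' ∈ (desc(C0) ∩ C) \ {c}. -/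
/-- every `t`-SMIPPC has `t`-uniqueness descendant code. -/
theorem smippc_has_uniqueness {n M q t : ℕ} (C : Finset (Fin n → Fin q)) (hM : C.card = M)
    (hSMIPPC : ∀ C0 ⊆ C, C0.Nonempty → C0.card ≤ t →
      (⋂ S ∈ {S : Finset (Fin n → Fin q) | S ⊆ C ∧ desc S = desc C0},
        (S : Set (Fin n → Fin q))).Nonempty) :
    ∀ C0 ⊆ C, C0.Nonempty → C0.card ≤ t →
      ∃ c ∈ C0, ∃ i : Fin n,
        ∀ c' ∈ (desc C0 ∩ (C : Set (Fin n → Fin q))) \ {c}, c' i ≠ c i := by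
  classical
  intro C0 hC0 hne hcard
  obtain ⟨c, hc⟩ := hSMIPPC C0 hC0 hne hcard
  simp only [Set.mem_iInter] at hc
  have hcC0 : c ∈ C0 := by
    have := hc C0 ⟨hC0, rfl⟩
    exact_mod_cast this
  refine ⟨c, hcC0, ?_⟩
  by_contra h
  push_neg at h
  set S : Finset (Fin n → Fin q) := (C.filter (fun x => x ∈ desc C0)).erase c with hS
  have hSsub : S ⊆ C := fun x hx => (Finset.mem_filter.1 (Finset.mem_of_mem_erase hx)).1
  have hdesc : desc S = desc C0 := by
    ext x
    constructor
    · intro hx i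
      obtain ⟨s, hs, hsi⟩ := hx i
      have hsd : s ∈ desc C0 := (Finset.mem_filter.1 (Finset.mem_of_mem_erase hs)).2
      obtain ⟨c0, hc0, hc0i⟩ := hsd i
      exact ⟨c0, hc0, by rw [hc0i, hsi]⟩
    · intro hx i
      obtain ⟨c0, hc0, hc0i⟩ := hx i
      by_cases hceq : c0 = c
      · obtain ⟨c', hc', hci⟩ := h i
        obtain ⟨⟨hc'd, hc'C⟩, hc'ne⟩ := hc'
        rw [Set.mem_singleton_iff] at hc'ne
        refine ⟨c', Finset.mem_erase.2 ⟨hc'ne, Finset.mem_filter.2 ⟨by exact_mod_cast hc'C, hc'd⟩⟩,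
          by rw [hci, ← hceq, hc0i]⟩
      · have hc0d : c0 ∈ desc C0 := fun j => ⟨c0, hc0, rfl⟩
        exact ⟨c0, Finset.mem_erase.2 ⟨hceq, Finset.mem_filter.2 ⟨hC0 hc0, hc0d⟩⟩, hc0i⟩
  have hmem := hc S ⟨hSsub, hdesc⟩
  exact Finset.notMem_erase c _ (by exact_mod_cast hmem)
end

section
/- If a binary (n,M,2) code C has t-uniqueness descendant code, then for any nonempty C0 ⊆ C with |C0| = t0 ≤ t and generated word x = AT(C0) written with coordinates x(i) = a_i/t_i in lowest terms (with a_i = 0, t_i = 1 when x(i) = 0), the number of colluders satisfies t0 = max{t_1, ..., t_n}. -/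
open Finset

def AT {n : ℕ} (S : Finset (Fin n → Fin 2)) : Fin n → ℚ :=
  fun i => (∑ c ∈ S, ((c i : ℕ) : ℚ)) / S.card

lemma AT_den_dvd {n : ℕ} (S : Finset (Fin n → Fin 2)) (i : Fin n) :
    (AT S i).den ∣ S.card := by
  have : AT S i = Rat.divInt ((∑ c ∈ S, (c i : ℕ) : ℕ) : ℤ) ((S.card : ℕ) : ℤ) := by
    rw [Rat.divInt_eq_div]
    push_cast [AT]
    ring
  rw [this]
  exact_mod_cast Rat.den_dvd ((∑ c ∈ S, (c i : ℕ) : ℕ) : ℤ) ((S.card : ℕ) : ℤ)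

/-- if a binary code has `t`-uniqueness descendant code, then for any
colluder set `C0` of size at most `t`, the number of colluders equals the maximum of
the reduced denominators of the coordinates of the generated word `AT(C0)`. -/
theorem colluder_count_eq_max_den {n M t : ℕ} (C : Finset (Fin n → Fin 2)) (hM : C.card = M)
    (hUniq : ∀ C0 ⊆ C, C0.Nonempty → C0.card ≤ t →
      ∃ c ∈ C0, ∃ i : Fin n,
        ∀ c' ∈ (desc C0 ∩ (C : Set (Fin n → Fin 2))) \ {c}, c' i ≠ c i) :
    ∀ C0 ⊆ C, C0.Nonempty → C0.card ≤ t →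
      C0.card = Finset.univ.sup fun i : Fin n => (AT C0 i).den := by
  intro C0 hsub hne hle
  have hs : 0 < C0.card := Finset.card_pos.mpr hne
  apply le_antisymm
  · -- there is a coordinate with denominator C0.card
    obtain ⟨c, hc, i, hdiff⟩ := hUniq C0 hsub hne hle
    have hne' : ∀ c' ∈ C0, c' ≠ c → c' i ≠ c i := by
      intro c' hc' hcc
      apply hdiff
      exact ⟨⟨fun j => ⟨c', hc', rfl⟩, hsub hc'⟩, hcc⟩
    -- compute the numerator sum
    obtain ⟨a, ha⟩ : ∃ a : ℕ, a = ∑ c' ∈ C0, ((c' i : ℕ)) := ⟨_, rfl⟩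
    have hsum : a = (c i : ℕ) + (C0.card - 1) * (1 - (c i : ℕ)) := by
      have hval : ∀ c' ∈ C0.erase c, ((c' i : ℕ)) = 1 - (c i : ℕ) := by
        intro c' hc'
        have h1 := hne' c' (Finset.mem_of_mem_erase hc') (Finset.ne_of_mem_erase hc')
        have h2 : (c' i : ℕ) ≠ (c i : ℕ) := fun h => h1 (Fin.ext h)
        have h3 := (c' i).isLt
        have h4 := (c i).isLt
        clear ha hne' hdiff hUniq
        omega
      rw [ha, ← Finset.add_sum_erase _ _ hc, Finset.sum_congr rfl hval,
        Finset.sum_const, smul_eq_mul, Finset.card_erase_of_mem hc]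
    have hcop : Nat.Coprime a C0.card := by
      have hlt := (c i).isLt
      obtain h | h : (c i : ℕ) = 0 ∨ (c i : ℕ) = 1 := by clear ha hne' hdiff hUniq hsum; omega
      · have : a = C0.card - 1 := by clear ha hne' hdiff hUniq; rw [hsum, h]; omega
        rw [this]
        have h' : Nat.Coprime (C0.card - 1) ((C0.card - 1) + 1) := by
          simp
        rwa [Nat.sub_add_cancel hs] at h'
      · have : a = 1 := by clear ha hne' hdiff hUniq; rw [hsum, h]; omega
        rw [this]
        exact Nat.coprime_one_left _
    have hden : (AT C0 i).den = C0.card := by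
      have hAT : AT C0 i = ((a : ℤ) : ℚ) / ((C0.card : ℤ) : ℚ) := by
        push_cast [AT, ha]
        ring
      have := Rat.den_div_eq_of_coprime (a := (a : ℤ)) (b := (C0.card : ℤ))
        (by exact_mod_cast hs) (by simpa using hcop)
      rw [hAT]
      exact_mod_cast this
    calc C0.card = (AT C0 i).den := hden.symm
      _ ≤ _ := Finset.le_sup (f := fun i : Fin n => (AT C0 i).den) (Finset.mem_univ i)
  · apply Finset.sup_le
    intro i _
    exact Nat.le_of_dvd hs (AT_den_dvd C0 i)
end

section
/- Suppose C has t-uniqueness descendant code, C0 ⊆ C with 1 ≤ |C0| ≤ t, x = AT(C0), and c ∈ C with an index i such that c ∈ desc(C0) ∩ C and c(i) ≠ c'(i) for all c' ∈ (desc(C0) ∩ C) \ {c}. Then c ∈ C0. -/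
/-- a codeword of `desc(C0) ∩ C` that is uniquely distinguished at a
coordinate among `desc(C0) ∩ C` must be a colluder, i.e. belongs to `C0`. -/
theorem unique_codeword_is_colluder {n M q t : ℕ} (C : Finset (Fin n → Fin q)) (hM : C.card = M)
    (hUniq : ∀ C0 ⊆ C, C0.Nonempty → C0.card ≤ t →
      ∃ c ∈ C0, ∃ i : Fin n,
        ∀ c' ∈ (desc C0 ∩ (C : Set (Fin n → Fin q))) \ {c}, c' i ≠ c i)
    (C0 : Finset (Fin n → Fin q)) (hsub : C0 ⊆ C) (hne : C0.Nonempty) (hcard : C0.card ≤ t)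
    (c : Fin n → Fin q) (hcmem : c ∈ desc C0 ∩ (C : Set (Fin n → Fin q))) (i : Fin n)
    (hunique : ∀ c' ∈ (desc C0 ∩ (C : Set (Fin n → Fin q))) \ {c}, c' i ≠ c i) :
    c ∈ C0 := by
  obtain ⟨hdesc, hC⟩ := hcmem
  obtain ⟨c'', hc''0, hc''i⟩ := hdesc i
  by_cases h : c'' = c
  · exact h ▸ hc''0
  · exact absurd hc''i (hunique c'' ⟨⟨fun j => ⟨c'', hc''0, rfl⟩, hsub hc''0⟩, h⟩)
end

section
/- For a multiset [D0] = [r1×d1, ..., rs×ds] of binary codewords from a code D with t-uniqueness descendant code, with total size Σ rj ≤ t, if L = lcm of the reduced denominators of the coordinates of x = AT([D0]), then there exists a positive integer b with Σ rj = b·L, and moreover b divides every multiplicity rj. -/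
open Finset

/-- for a multiset `[D0]` of codewords of a binary code `D` with
`t`-uniqueness descendant code, with multiplicities `r` and total size at most `t`,
if `L` is the lcm of the reduced denominators of the coordinates of the generated
word, then the total size is `b·L` for some positive integer `b`, and `b` divides
every multiplicity. -/
theorem multiset_size_lcm {n M t : ℕ} (D : Finset (Fin n → Fin 2)) (hM : D.card = M)
    (hUniq : ∀ D' ⊆ D, D'.Nonempty → D'.card ≤ t →
      ∃ d ∈ D', ∃ i : Fin n,
        ∀ d' ∈ (desc D' ∩ (D : Set (Fin n → Fin 2))) \ {d}, d' i ≠ d i)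
    (D0 : Finset (Fin n → Fin 2)) (hsub : D0 ⊆ D) (hne : D0.Nonempty)
    (r : (Fin n → Fin 2) → ℕ) (hr : ∀ d ∈ D0, 1 ≤ r d)
    (T : ℕ) (hT : T = ∑ d ∈ D0, r d) (hTt : T ≤ t)
    (x : Fin n → ℚ)
    (hx : ∀ i, x i = (∑ d ∈ D0, (r d : ℚ) * ((d i : ℕ) : ℚ)) / (T : ℚ))
    (L : ℕ) (hL : L = Finset.univ.lcm fun i : Fin n => (x i).den) :
    ∃ b : ℕ, 0 < b ∧ T = b * L ∧ ∀ d ∈ D0, b ∣ r d := by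
  classical
  obtain ⟨d0, hd0⟩ := hne
  have hT0 : 0 < T := by
    rw [hT]
    exact lt_of_lt_of_le (hr d0 hd0) (Finset.single_le_sum (fun d _ => Nat.zero_le _) hd0)
  set N : Fin n → ℕ := fun i => ∑ d ∈ D0, r d * (d i : ℕ) with hN
  have hxN : ∀ i, x i = (N i : ℚ) / (T : ℚ) := by
    intro i
    rw [hx i, hN]
    push_cast
    ring_nf
  have hden : ∀ i, (x i).den ∣ T := by
    intro i
    have h := Rat.den_dvd (N i : ℤ) (T : ℤ)
    rw [Rat.divInt_eq_div] at h
    have : ((N i : ℤ) : ℚ) / ((T : ℤ) : ℚ) = x i := by rw [hxN i]; push_cast; ring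
    rw [this] at h
    exact_mod_cast h
  have hLT : L ∣ T := by
    rw [hL]
    exact Finset.lcm_dvd fun i _ => hden i
  have hL0 : L ≠ 0 := fun h => by simp [h] at hLT; omega
  set b : ℕ := T / L with hb
  have hTbL : T = b * L := (Nat.div_mul_cancel hLT).symm
  have hb0 : 0 < b := by
    rcases Nat.eq_zero_or_pos b with h | h
    · rw [h, zero_mul] at hTbL; omega
    · exact h
  -- key: b divides every numerator N i (over ℤ)
  have key : ∀ i, (b : ℤ) ∣ (N i : ℤ) := by
    intro i
    set q : ℕ := (x i).den with hq
    have hq0 : (q : ℤ) ≠ 0 := by exact_mod_cast (x i).den_nz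
    have hqL : q ∣ L := by
      rw [hL]; exact Finset.dvd_lcm (Finset.mem_univ i)
    obtain ⟨m, hm⟩ := hqL
    have hcross : (N i : ℤ) * q = (x i).num * T := by
      have hq0' : (q : ℚ) ≠ 0 := by exact_mod_cast (x i).den_nz
      have hT0' : (T : ℚ) ≠ 0 := Nat.cast_ne_zero.mpr (by omega)
      have h1 : (x i) * (T : ℚ) = (N i : ℚ) := by
        rw [hxN i]; field_simp
      have h2 : ((x i).num : ℚ) / (q : ℚ) = x i := by
        rw [hq]; exact Rat.num_div_den (x i)
      have h2' : ((x i).num : ℚ) = x i * q := by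
        have h3 := congrArg (fun z : ℚ => z * (q : ℚ)) h2
        simp only [div_mul_cancel₀ _ hq0'] at h3
        exact h3
      have hfin : ((N i : ℤ) : ℚ) * ((q : ℤ) : ℚ) = (((x i).num : ℤ) : ℚ) * ((T : ℤ) : ℚ) := by
        push_cast
        rw [← h1, h2']
        ring
      exact_mod_cast hfin
    have hT' : (T : ℤ) = b * (q * m) := by
      rw [hTbL, hm]; push_cast; ring
    rw [hT'] at hcross
    have : (N i : ℤ) * q = ((x i).num * b * m) * q := by rw [hcross]; ring
    have hNi : (N i : ℤ) = (x i).num * b * m := mul_right_cancel₀ hq0 this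
    exact ⟨(x i).num * m, by rw [hNi]; ring⟩
  have hbT : (b : ℤ) ∣ (T : ℤ) := ⟨L, by exact_mod_cast hTbL⟩
  -- main induction
  have main : ∀ k : ℕ, ∀ S : Finset (Fin n → Fin 2), S ⊆ D0 → S.card = k →
      (∀ d ∈ D0, d ∉ S → b ∣ r d) → ∀ d ∈ D0, b ∣ r d := by
    intro k
    induction k with
    | zero =>
      intro S hS hcard hout d hd
      exact hout d hd (by simp [Finset.card_eq_zero.mp hcard])
    | succ k ih =>
      intro S hS hcard hout
      have hSne : S.Nonempty := Finset.card_pos.mp (by omega)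
      have hScard : S.card ≤ t := by
        have h1 : S.card ≤ D0.card := Finset.card_le_card hS
        have h2 : D0.card ≤ T := by
          rw [hT]
          calc D0.card = ∑ _d ∈ D0, 1 := by simp
            _ ≤ ∑ d ∈ D0, r d := Finset.sum_le_sum hr
        omega
      obtain ⟨d, hdS, i, hi⟩ := hUniq S (hS.trans hsub) hSne hScard
      have hdD0 : d ∈ D0 := hS hdS
      -- every other element of S differs from d at coordinate i
      have hdiff : ∀ d' ∈ S, d' ≠ d → d' i ≠ d i := by
        intro d' hd' hne'
        apply hi
        constructor
        · constructor
          · intro j; exact ⟨d', hd', rfl⟩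
          · exact hsub (hS hd')
        · simpa using hne'
      -- b divides the S-part of the numerator
      have hsplit : (N i : ℤ) = (∑ d' ∈ S, (r d' : ℤ) * ((d' i : ℕ) : ℤ))
          + ∑ d' ∈ D0 \ S, (r d' : ℤ) * ((d' i : ℕ) : ℤ) := by
        rw [hN]
        push_cast
        rw [← Finset.sum_sdiff hS]
        ring
      have hout' : (b : ℤ) ∣ ∑ d' ∈ D0 \ S, (r d' : ℤ) * ((d' i : ℕ) : ℤ) := by
        apply Finset.dvd_sum
        intro d' hd'
        rw [Finset.mem_sdiff] at hd'
        exact Dvd.dvd.mul_right (by exact_mod_cast hout d' hd'.1 hd'.2) _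
      have hSnum : (b : ℤ) ∣ ∑ d' ∈ S, (r d' : ℤ) * ((d' i : ℕ) : ℤ) := by
        have := key i
        rw [hsplit] at this
        exact (dvd_add_right hout').mp (by rwa [add_comm] at this)
      have hSsum : (b : ℤ) ∣ ∑ d' ∈ S, (r d' : ℤ) := by
        have hsplit2 : (T : ℤ) = (∑ d' ∈ S, (r d' : ℤ)) + ∑ d' ∈ D0 \ S, (r d' : ℤ) := by
          rw [hT]; push_cast; rw [← Finset.sum_sdiff hS]; ring
        have hout2 : (b : ℤ) ∣ ∑ d' ∈ D0 \ S, (r d' : ℤ) := by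
          apply Finset.dvd_sum
          intro d' hd'
          rw [Finset.mem_sdiff] at hd'
          exact_mod_cast hout d' hd'.1 hd'.2
        have := hbT
        rw [hsplit2] at this
        exact (dvd_add_right hout2).mp (by rwa [add_comm] at this)
      -- b ∣ r d
      have hbrd : b ∣ r d := by
        have hsum_erase : ∑ d' ∈ S, (r d' : ℤ) * ((d' i : ℕ) : ℤ)
            = (r d : ℤ) * ((d i : ℕ) : ℤ)
              + ∑ d' ∈ S.erase d, (r d' : ℤ) * ((d' i : ℕ) : ℤ) :=
          (Finset.add_sum_erase S _ hdS).symm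
        have hval : (d i : ℕ) = 0 ∨ (d i : ℕ) = 1 := by
          have hgen : ∀ a : Fin 2, (a : ℕ) = 0 ∨ (a : ℕ) = 1 := by decide
          exact hgen (d i)
        have hother : ∀ d' ∈ S.erase d, ((d' i : ℕ) : ℤ) = 1 - ((d i : ℕ) : ℤ) := by
          intro d' hd'
          rw [Finset.mem_erase] at hd'
          have hne2 : d' i ≠ d i := hdiff d' hd'.2 hd'.1
          have hgen : ∀ a c : Fin 2, a ≠ c → ((a : ℕ) : ℤ) = 1 - ((c : ℕ) : ℤ) := by decide
          exact hgen _ _ hne2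
        have hdvd : (b : ℤ) ∣ (r d : ℤ) := by
          rcases hval with h | h
          · -- d i = 0, others = 1
            have e : ∀ d' ∈ S.erase d, (r d' : ℤ) * ((d' i : ℕ) : ℤ) = (r d' : ℤ) := by
              intro d' hd'
              rw [hother d' hd', h]
              push_cast; ring
            have heq : ∑ d' ∈ S, (r d' : ℤ) * ((d' i : ℕ) : ℤ)
                = ∑ d' ∈ S.erase d, (r d' : ℤ) := by
              rw [hsum_erase, h, Finset.sum_congr rfl e]
              simp
            have herase := Finset.add_sum_erase S (fun d' => (r d' : ℤ)) hdS
            have hrd : (r d : ℤ) = (∑ d' ∈ S, (r d' : ℤ))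
                - ∑ d' ∈ S, (r d' : ℤ) * ((d' i : ℕ) : ℤ) := by
              rw [heq]; linarith
            rw [hrd]
            exact dvd_sub hSsum hSnum
          · -- d i = 1, others = 0
            have e : ∀ d' ∈ S.erase d, (r d' : ℤ) * ((d' i : ℕ) : ℤ) = 0 := by
              intro d' hd'
              rw [hother d' hd', h]
              push_cast; ring
            have heq : ∑ d' ∈ S, (r d' : ℤ) * ((d' i : ℕ) : ℤ) = (r d : ℤ) := by
              rw [hsum_erase, h, Finset.sum_eq_zero e]
              simp
            rwa [heq] at hSnum
        exact_mod_cast hdvd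
      -- recurse
      apply ih (S.erase d) ((Finset.erase_subset _ _).trans hS)
        (by rw [Finset.card_erase_of_mem hdS, hcard]; exact Nat.succ_sub_one k)
      intro d' hd' hnd'
      by_cases h : d' = d
      · rwa [h]
      · exact hout d' hd' (fun hmem => hnd' (Finset.mem_erase.mpr ⟨h, hmem⟩))
  refine ⟨b, hb0, hTbL, main D0.card D0 (Finset.Subset.refl _) rfl ?_⟩
  intro d hd hnd
  exact absurd hd hnd
end

section
/- Let C = B ∘ D be the concatenation of a q-ary code B of length n1 with a binary code D of length n2 via a bijection f: {0,...,q−1} → D, where both B and D have t-uniqueness descendant code. Then for any nonempty C0 ⊆ C with |C0| ≤ t and x = AT(C0) with coordinates written as reduced fractions a_i/t_i, we have |C0| = lcm(t_1, ..., t_{n1·n2}). -/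
open Finset

/-- Descendant code for words indexed by an arbitrary finite index type. -/
def descG {ι α : Type*} (C' : Finset (ι → α)) : Set (ι → α) :=
  {x | ∀ i, ∃ c ∈ C', c i = x i}

/-- Generated word under averaging attack, for binary words over an index type. -/
def ATG {ι : Type*} [Fintype ι] (S : Finset (ι → Fin 2)) : ι → ℚ :=
  fun i => (∑ c ∈ S, ((c i : ℕ) : ℚ)) / S.card

/-- `t`-uniqueness descendant code property. -/
def hasUniq {ι α : Type*} [DecidableEq (ι → α)] (C : Finset (ι → α)) (t : ℕ) : Prop :=
  ∀ C0 ⊆ C, C0.Nonempty → C0.card ≤ t →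
    ∃ c ∈ C0, ∃ i : ι,
      ∀ c' ∈ (descG C0 ∩ (C : Set (ι → α))) \ {c}, c' i ≠ c i

lemma num_mul_eq (s N : ℕ) (hN : N ≠ 0) :
    ((s:ℚ)/N).num.natAbs * N = s * ((s:ℚ)/N).den := by
  set q : ℚ := (s:ℚ)/N with hq
  have hNQ : (N:ℚ) ≠ 0 := Nat.cast_ne_zero.mpr hN
  have h1 : (q.num : ℚ) * N = (s:ℚ) * q.den := by
    rw [← Rat.num_div_den q] at hq
    field_simp at hq
    linarith [hq]
  have h2 : q.num * (N:ℤ) = (s:ℤ) * q.den := by exact_mod_cast h1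
  have := congrArg Int.natAbs h2
  simpa [Int.natAbs_mul, Int.natAbs_natCast] using this

lemma den_div_dvd (s N : ℕ) (hN : N ≠ 0) : ((s:ℚ)/N).den ∣ N := by
  have h := num_mul_eq s N hN
  have hcop : (((s:ℚ)/N).den).Coprime (((s:ℚ)/N).num.natAbs) := (Rat.reduced _).symm
  refine hcop.dvd_of_dvd_mul_left ?_
  rw [h]
  exact dvd_mul_left _ _

lemma pow_dvd_den (s N p a : ℕ) (hp : p.Prime) (hps : ¬ p ∣ s) (hpa : p^a ∣ N) (hN : N ≠ 0) :
    p^a ∣ ((s:ℚ)/N).den := by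
  have h := num_mul_eq s N hN
  have h2 : p^a ∣ s * ((s:ℚ)/N).den := h ▸ Dvd.dvd.mul_left hpa _
  have hcop : (p^a).Coprime s := ((hp.coprime_iff_not_dvd).mpr hps).pow_left _
  exact hcop.dvd_of_dvd_mul_left h2

/-- for the concatenation `C = B ∘ D` of a `q`-ary code `B` (length `n1`)
with a binary code `D` (length `n2`) via a bijection `f : {0,…,q−1} → D`, where both
`B` and `D` have `t`-uniqueness descendant code, the number of colluders of any
nonempty `C0 ⊆ C` of size at most `t` equals the lcm of the reduced denominators of
the coordinates of the generated word `AT(C0)`. -/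
theorem concatenated_colluder_count {n1 n2 M q t : ℕ}
    (B : Finset (Fin n1 → Fin q)) (hMB : B.card = M)
    (D : Finset (Fin n2 → Fin 2)) (hqD : D.card = q)
    (f : Fin q → (Fin n2 → Fin 2))
    (hf_inj : Function.Injective f)
    (hf_mem : ∀ k, f k ∈ D)
    (hf_surj : ∀ d ∈ D, ∃ k, f k = d)
    (hUniqB : hasUniq B t) (hUniqD : hasUniq D t)
    (C : Finset (Fin n1 × Fin n2 → Fin 2))
    (hC : C = B.image fun b => fun p : Fin n1 × Fin n2 => f (b p.1) p.2) :
    ∀ C0 ⊆ C, C0.Nonempty → C0.card ≤ t →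
      C0.card = Finset.univ.lcm fun i : Fin n1 × Fin n2 => (ATG C0 i).den := by
  classical
  intro C0 hsub hne hcard
  set concat : (Fin n1 → Fin q) → (Fin n1 × Fin n2 → Fin 2) :=
    fun b => fun p : Fin n1 × Fin n2 => f (b p.1) p.2 with hconcat
  have hinj : Function.Injective concat := by
    intro b b' h
    funext i
    apply hf_inj
    funext j
    exact congrFun h (i, j)
  set B0 : Finset (Fin n1 → Fin q) := B.filter (fun b => concat b ∈ C0) with hB0
  have hB0sub : B0 ⊆ B := filter_subset _ _
  have hC0B0 : C0 = B0.image concat := by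
    apply Finset.Subset.antisymm
    · intro c hc
      have hcC := hsub hc
      rw [hC] at hcC
      obtain ⟨b, hbB, hbc⟩ := mem_image.mp hcC
      exact mem_image.mpr ⟨b, mem_filter.mpr ⟨hbB, by rw [hbc]; exact hc⟩, hbc⟩
    · intro c hc
      obtain ⟨b, hb, hbc⟩ := mem_image.mp hc
      rw [← hbc]
      exact (mem_filter.mp hb).2
  set N := C0.card with hNdef
  have hcardB0 : B0.card = N := by
    rw [hNdef, hC0B0, Finset.card_image_of_injective _ hinj]
  have hNne : N ≠ 0 := hne.card_pos.ne'
  set s : Fin n1 × Fin n2 → ℕ := fun pidx => ∑ c ∈ C0, ((c pidx : Fin 2) : ℕ) with hs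
  have hATG : ∀ pidx, ATG C0 pidx = (s pidx : ℚ)/(N:ℚ) := by
    intro pidx
    unfold ATG
    rw [hs]
    push_cast
    rfl
  -- core claim: for each prime dividing N there is a coordinate whose sum isn't divisible by it
  have hcore : ∀ p : ℕ, p.Prime → p ∣ N → ∃ pidx : Fin n1 × Fin n2, ¬ p ∣ s pidx := by
    intro p hp hpN
    have hB0ne : B0.Nonempty := by
      rw [Finset.nonempty_iff_ne_empty]
      intro h
      rw [h, Finset.image_empty] at hC0B0
      exact hne.ne_empty hC0B0
    obtain ⟨b, hbB0, i, hbuniq⟩ := hUniqB B0 hB0sub hB0ne (hcardB0 ▸ hcard)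
    have hbu : ∀ b' ∈ B0, b' ≠ b → b' i ≠ b i := by
      intro b' hb' hne'
      refine hbuniq b' ⟨⟨?_, hB0sub hb'⟩, ?_⟩
      · intro i'; exact ⟨b', hb', rfl⟩
      · simpa using hne'
    set m : Fin q → ℕ := fun k => (B0.filter (fun b' => b' i = k)).card with hm
    have hmsum : ∑ k, m k = N := by
      rw [← hcardB0]
      exact (Finset.card_eq_sum_card_fiberwise (fun b' _ => mem_univ (b' i))).symm
    have hmb : m (b i) = 1 := by
      have hset : B0.filter (fun b' => b' i = b i) = {b} := by
        apply Finset.Subset.antisymm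
        · intro b' hb'
          rw [Finset.mem_singleton]
          by_contra hne'
          exact hbu b' (mem_filter.mp hb').1 hne' (mem_filter.mp hb').2
        · intro b' hb'
          rw [Finset.mem_singleton] at hb'
          subst hb'
          exact mem_filter.mpr ⟨hbB0, rfl⟩
      rw [hm]
      simp only [hset, Finset.card_singleton]
    set K : Finset (Fin q) := univ.filter (fun k => ¬ p ∣ m k) with hK
    have hbK : b i ∈ K := by
      rw [hK, mem_filter]
      refine ⟨mem_univ _, ?_⟩
      rw [hmb, Nat.dvd_one]
      exact hp.ne_one
    set S' : Finset (Fin n2 → Fin 2) := K.image f with hS'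
    have hS'sub : S' ⊆ D := by
      intro d hd
      obtain ⟨k, _, hk⟩ := mem_image.mp hd
      exact hk ▸ hf_mem k
    have hS'ne : S'.Nonempty := ⟨f (b i), mem_image.mpr ⟨b i, hbK, rfl⟩⟩
    have hS'card : S'.card ≤ t := by
      have h1 : S'.card = K.card := Finset.card_image_of_injective _ hf_inj
      have h2 : K.card ≤ ∑ k ∈ K, m k := by
        have := Finset.card_nsmul_le_sum K m 1 (fun k hk => by
          have hkd : ¬ p ∣ m k := (mem_filter.mp hk).2
          exact Nat.pos_of_ne_zero (fun h => hkd (h ▸ dvd_zero p)))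
        simpa using this
      have h3 : ∑ k ∈ K, m k ≤ ∑ k, m k :=
        Finset.sum_le_sum_of_subset (subset_univ K)
      rw [h1]
      calc K.card ≤ ∑ k ∈ K, m k := h2
        _ ≤ ∑ k, m k := h3
        _ = N := hmsum
        _ ≤ t := hcard
    obtain ⟨dstar, hdS', j, hduniq⟩ := hUniqD S' hS'sub hS'ne hS'card
    obtain ⟨kstar, hkK, hfk⟩ := mem_image.mp hdS'
    have hother : ∀ k ∈ K, k ≠ kstar → f k j ≠ f kstar j := by
      intro k hk hkne
      have h1 : f k ∈ (descG S' ∩ (D : Set (Fin n2 → Fin 2))) \ {dstar} := by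
        refine ⟨⟨?_, hf_mem k⟩, ?_⟩
        · intro j'; exact ⟨f k, mem_image.mpr ⟨k, hk, rfl⟩, rfl⟩
        · simp only [Set.mem_singleton_iff, ← hfk]
          exact fun h => hkne (hf_inj h)
      have h2 := hduniq (f k) h1
      rw [hfk]
      exact h2
    refine ⟨(i, j), ?_⟩
    have hseq : s (i, j) = ∑ k, m k * ((f k j : Fin 2) : ℕ) := by
      rw [hs]
      simp only
      rw [hC0B0, Finset.sum_image (fun x _ y _ h => hinj h)]
      have h0 : ∀ b' : Fin n1 → Fin q,
          ((concat b' (i,j) : Fin 2) : ℕ) = ((f (b' i) j : Fin 2) : ℕ) := fun _ => rfl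
      simp only [h0]
      rw [← Finset.sum_fiberwise' B0 (fun b' => b' i)
        (fun k => ((f k j : Fin 2) : ℕ))]
      apply Finset.sum_congr rfl
      intro k _
      rw [Finset.sum_const, smul_eq_mul]
    intro hdvd
    -- pass to ZMod p
    set vb : Fin q → ZMod p := fun k => (((f k j : Fin 2) : ℕ) : ZMod p) with hvb
    have hz : (∑ k, (m k : ZMod p) * vb k) = 0 := by
      have h1 : ((∑ k, m k * ((f k j : Fin 2) : ℕ) : ℕ) : ZMod p) = 0 := by
        rw [← hseq]
        exact (ZMod.natCast_eq_zero_iff _ _).mpr hdvd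
      push_cast at h1
      exact h1
    have hcomp0 : ∑ k ∈ univ.filter (fun k => ¬ ¬ p ∣ m k), (m k : ZMod p) = 0 := by
      apply Finset.sum_eq_zero
      intro k hk
      exact (ZMod.natCast_eq_zero_iff _ _).mpr (not_not.mp (mem_filter.mp hk).2)
    have hKsum0 : ∑ k ∈ K, (m k : ZMod p) = 0 := by
      have h1 : ((∑ k, m k : ℕ) : ZMod p) = 0 := by
        rw [hmsum]
        exact (ZMod.natCast_eq_zero_iff _ _).mpr hpN
      push_cast at h1
      rw [← Finset.sum_filter_add_sum_filter_not univ (fun k => ¬ p ∣ m k), hcomp0, add_zero] at h1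
      exact h1
    have hzK : ∑ k ∈ K, (m k : ZMod p) * vb k = 0 := by
      rw [← Finset.sum_filter_add_sum_filter_not univ (fun k => ¬ p ∣ m k)] at hz
      have hcomp : ∑ k ∈ univ.filter (fun k => ¬ ¬ p ∣ m k), (m k : ZMod p) * vb k = 0 := by
        apply Finset.sum_eq_zero
        intro k hk
        rw [(ZMod.natCast_eq_zero_iff _ _).mpr (not_not.mp (mem_filter.mp hk).2), zero_mul]
      rw [hcomp, add_zero] at hz
      exact hz
    -- split off kstar
    rw [← Finset.sum_erase_add K _ hkK] at hzK hKsum0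
    have hpm : ¬ p ∣ m kstar := (mem_filter.mp hkK).2
    have hmstar : (m kstar : ZMod p) ≠ 0 := fun h =>
      hpm ((ZMod.natCast_eq_zero_iff _ _).mp h)
    have hvals : ∀ k ∈ K.erase kstar, ((f k j : Fin 2) : ℕ) = 1 - ((f kstar j : Fin 2) : ℕ) := by
      intro k hk
      have hkne : k ≠ kstar := Finset.ne_of_mem_erase hk
      have hkK' : k ∈ K := Finset.mem_of_mem_erase hk
      have hne2 : f k j ≠ f kstar j := hother k hkK' hkne
      have hlt1 : ((f k j : Fin 2) : ℕ) < 2 := (f k j).isLt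
      have hlt2 : ((f kstar j : Fin 2) : ℕ) < 2 := (f kstar j).isLt
      have hvne : ((f k j : Fin 2) : ℕ) ≠ ((f kstar j : Fin 2) : ℕ) := by
        intro h
        exact hne2 (Fin.ext h)
      omega
    have hx01 : ((f kstar j : Fin 2) : ℕ) = 0 ∨ ((f kstar j : Fin 2) : ℕ) = 1 := by
      have := (f kstar j).isLt
      omega
    rcases hx01 with hx | hx
    · -- f kstar j = 0 : erase members have value 1
      have hv0 : vb kstar = 0 := by rw [hvb]; simp only [hx]; norm_num
      have hvE : ∀ k ∈ K.erase kstar, vb k = 1 := by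
        intro k hk
        rw [hvb]
        simp only [hvals k hk, hx]
        norm_num
      rw [Finset.sum_congr rfl (fun k hk => by rw [hvE k hk, mul_one])] at hzK
      rw [hv0, mul_zero, add_zero] at hzK
      rw [hzK, zero_add] at hKsum0
      exact hmstar hKsum0
    · -- f kstar j = 1 : erase members have value 0
      have hv1 : vb kstar = 1 := by rw [hvb]; simp only [hx]; norm_num
      have hvE : ∀ k ∈ K.erase kstar, vb k = 0 := by
        intro k hk
        rw [hvb]
        simp only [hvals k hk, hx]
        norm_num
      rw [Finset.sum_congr rfl (fun k hk => by rw [hvE k hk, mul_zero]),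
        Finset.sum_const_zero, zero_add, hv1, mul_one] at hzK
      exact hmstar hzK
  -- assemble
  have hdvdN : ∀ pidx, (ATG C0 pidx).den ∣ N := fun pidx => by
    rw [hATG]; exact den_div_dvd _ _ hNne
  set L := Finset.univ.lcm (fun idx : Fin n1 × Fin n2 => (ATG C0 idx).den) with hL
  have hLdvd : L ∣ N := Finset.lcm_dvd (fun idx _ => hdvdN idx)
  have hLne : L ≠ 0 := fun h => hNne (zero_dvd_iff.mp (h ▸ hLdvd))
  have hNL : N ∣ L := by
    rw [← Nat.factorization_prime_le_iff_dvd hNne hLne]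
    intro pp hpp
    by_cases hzf : N.factorization pp = 0
    · simp [hzf]
    · have hppN : pp ∣ N := Nat.dvd_of_factorization_pos hzf
      obtain ⟨idx, hidx⟩ := hcore pp hpp hppN
      have h1 : pp ^ (N.factorization pp) ∣ (ATG C0 idx).den := by
        rw [hATG]
        exact pow_dvd_den _ _ _ _ hpp hidx (Nat.ordProj_dvd N pp) hNne
      have h2 : (ATG C0 idx).den ∣ L := Finset.dvd_lcm (mem_univ idx)
      exact (Nat.Prime.pow_dvd_iff_le_factorization hpp hLne).mp (h1.trans h2)
  exact Nat.dvd_antisymm hNL hLdvd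
end
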